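/- Let a and b be coprime positive integers. For every (b,-a)-Dyck partition π ∈ D_{b,-a}(a,b), mkwd(G_{b,a}(π)) = sw⁺_{b,-a} ∘ rev (mkwd(π)), where G_{b,a} is the Gorsky–Mazin map. -/

import Mathlib

/-!
Label every step of `mkpath π` by the `(b,-a)`-level of its starting point. Coprimality makes
these `a + b` levels distinct and the Dyck condition makes them nonnegative. The whole word has
weight `0`, so the levels of the reversed word are exactly their negatives, and `sw⁺` of the
reversed word just lists the steps in increasing order of starting level.

On the Gorsky–Mazin side, the generator of the east step in column `x` is its starting level
minus `a`. Row `y` of the region between the path and the diagonal meets a window of `a`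
consecutive levels only in the residue class of `b y` modulo `a`, and does so exactly when the
north step of row `y` starts above the east step. Hence `g_{b,a}` of that generator counts the
north steps starting above the east step, and by conjugation the `i`-th row of `G_{b,a}(π)`
from the bottom is the number of east steps starting below the north step of rank `i`, i.e. the
number of `E`s preceding the `i`-th `N` in the sorted word.
-/

inductive Letter : Type
  | N : Letter
  | E : Letter
deriving DecidableEq, Repr

/-- weight of a letter: `N` has weight `r`, `E` has weight `s`. -/
def wt (r s : ℤ) : Letter → ℤ
  | Letter.N => r
  | Letter.E => s

/-- Pair each letter of the word with its `(r,s)`-level (east-north convention),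
    starting from level `l`. -/
def lvls (r s : ℤ) : ℤ → List Letter → List (Letter × ℤ)
  | _, [] => []
  | l, c :: w => (c, l + wt r s c) :: lvls r s (l + wt r s c) w

/-- Helper for `mkwd`: given the row lengths of the partition read from the bottom
    of the rectangle (weakly increasing list), produce the frontier word. -/
def stairs (b : ℕ) : ℕ → List ℕ → List Letter
  | prev, [] => List.replicate (b - prev) Letter.E
  | prev, q :: qs => List.replicate (q - prev) Letter.E ++ Letter.N :: stairs b q qs

/-- `mkwd a b π`: the word of the frontier lattice path (from `(0,0)` to `(b,a)`) of
    the partition `π` drawn in the `a×b` rectangle: the number of `E`'s before the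
    `i`-th `N` is the `(a+1-i)`-th part of `π` (padded with zero parts to length `a`). -/
def mkwd (a b : ℕ) (π : List ℕ) : List Letter :=
  stairs b 0 ((π ++ List.replicate (a - π.length) 0).reverse)

/-- The `i`-th part of `π` (1-based), zero beyond the length of `π`. -/
def part (π : List ℕ) (i : ℕ) : ℕ := π.getD (i - 1) 0

/-- The `(b,-a)`-level of the lattice square `[x,x+1]×[y,y+1]`, i.e. of its
    southeast corner `(x+1, y)`. -/
def sqLevel (a b : ℕ) (x y : ℕ) : ℤ := (b : ℤ) * y - (a : ℤ) * (x + 1)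

/-- The set of `(b,-a)`-levels of the lattice squares lying above the line `by = ax`
    and below `mkpath(π)` (the square `(x,y)` lies below the path iff `x ≥ part π (a-y)`,
    and strictly above the line iff its level is positive). -/
def lvlSet (a b : ℕ) (π : List ℕ) : Finset ℤ :=
  ((Finset.range b ×ˢ Finset.range a).filter
    (fun p => part π (a - p.2) ≤ p.1 ∧ 0 < sqLevel a b p.1 p.2)).image
    (fun p => sqLevel a b p.1 p.2)

/-- `π` is a `(b,-a)`-Dyck partition: every step of `mkpath(π)` has nonnegative
    `(b,-a)`-level (east-north convention), i.e. the path stays weakly above `by = ax`. -/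
def IsDyckPtn (a b : ℕ) (π : List ℕ) : Prop :=
  ∀ p ∈ lvls (b : ℤ) (-(a : ℤ)) 0 (mkwd a b π), 0 ≤ p.2

/-- `π` is a partition contained in the `a×b` rectangle. -/
def IsPtnIn (a b : ℕ) (π : List ℕ) : Prop :=
  List.Pairwise (· ≥ ·) π ∧ π.length ≤ a ∧ ∀ p ∈ π, p ≤ b

/-- `posBefore k k' = true` iff level `k` is swept before (or equals) level `k'`
    in the positive sweep order `0, -1, -2, …` then `…, 3, 2, 1`. -/
def posBefore (k k' : ℤ) : Bool :=
  if k ≤ 0 then (if k' ≤ 0 then decide (k' ≤ k) else true)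
  else (if k' ≤ 0 then false else decide (k' ≤ k))

/-- The positive sweep map `sw⁺_{r,s}`: levels are visited in the order
    `0, -1, -2, …` then `…, 3, 2, 1`, each level scanned left-to-right
    (a stable sort of the word by the level order). -/
def sweepPos (r s : ℤ) (w : List Letter) : List Letter :=
  ((lvls r s 0 w).mergeSort (fun p q => posBefore p.2 q.2)).map Prod.fst

/-- The `b`-generators `β₁ < ⋯ < β_b` of `π`: the levels of the lattice squares
    immediately above `mkpath(π)`, i.e. the east-north levels of the east steps,
    listed in increasing order. -/
def bGens (a b : ℕ) (π : List ℕ) : List ℤ :=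
  ((lvls (b : ℤ) (-(a : ℤ)) 0 (mkwd a b π)).filterMap
      (fun p => if p.1 = Letter.E then some p.2 else none)).mergeSort
    (fun x y => decide (x ≤ y))

/-- `g_{b,a}(β) = |{β, β+1, …, β+a-1} ∩ Δᶜ|`, where `Δᶜ` is the set of levels of
    lattice squares between `mkpath(π)` and the line `by = ax`. -/
def gGM (a b : ℕ) (π : List ℕ) (β : ℤ) : ℕ :=
  (((Finset.range a).image (fun t : ℕ => β + (t : ℤ))).filter (fun x => x ∈ lvlSet a b π)).card

/-- The Gorsky–Mazin partition `G_{b,a}(π)`: the partition whose `i`-th column has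
    length `g_{b,a}(βᵢ)`; its rows (the conjugate of the column lengths, discarding
    zero rows) are listed in decreasing order. -/
def GMpart (a b : ℕ) (π : List ℕ) : List ℕ :=
  let cols := (bGens a b π).map (gGM a b π)
  ((List.range a).map (fun j => (cols.filter (fun c => decide (j + 1 ≤ c))).length)).filter
    (fun t => decide (0 < t))

open Finset

def startLvls (r s : ℤ) : ℤ → List Letter → List (Letter × ℤ)
  | _, [] => []
  | l, c :: w => (c, l) :: startLvls r s (l + wt r s c) w

def wordWt (r s : ℤ) (w : List Letter) : ℤ := (w.map (wt r s)).sum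

lemma Letter.eq_of_eq_N_iff {c c' : Letter} (h : c = Letter.N ↔ c' = Letter.N) : c = c' := by
  cases c <;> cases c' <;> simp_all

section Levels

variable (r s : ℤ)

lemma lvls_eq_map_startLvls (l : ℤ) (w : List Letter) :
    lvls r s l w = (startLvls r s l w).map fun p => (p.1, p.2 + wt r s p.1) := by
  induction w generalizing l with
  | nil => rfl
  | cons c w ih => simp [lvls, startLvls, ih]

@[simp]
lemma startLvls_map_fst (l : ℤ) (w : List Letter) : (startLvls r s l w).map Prod.fst = w := by
  induction w generalizing l with
  | nil => rfl
  | cons c w ih => simp [startLvls, ih]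

lemma startLvls_add (l m : ℤ) (w : List Letter) :
    startLvls r s (l + m) w = (startLvls r s l w).map fun p => (p.1, p.2 + m) := by
  induction w generalizing l with
  | nil => rfl
  | cons c w ih => simp [startLvls, ← ih, add_right_comm]

lemma startLvls_append (l : ℤ) (u v : List Letter) :
    startLvls r s l (u ++ v) = startLvls r s l u ++ startLvls r s (l + wordWt r s u) v := by
  induction u generalizing l with
  | nil => simp [startLvls, wordWt]
  | cons c u ih => simp [startLvls, ih, wordWt, add_assoc]

lemma lvls_append (l : ℤ) (u v : List Letter) :
    lvls r s l (u ++ v) = lvls r s l u ++ lvls r s (l + wordWt r s u) v := by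
  simp only [lvls_eq_map_startLvls, startLvls_append, List.map_append]

@[simp]
lemma wordWt_reverse (w : List Letter) : wordWt r s w.reverse = wordWt r s w := by
  simp [wordWt, List.map_reverse, List.sum_reverse]

lemma lvls_reverse (w : List Letter) :
    lvls r s 0 w.reverse =
      ((startLvls r s 0 w).map fun p => (p.1, wordWt r s w - p.2)).reverse := by
  induction w with
  | nil => rfl
  | cons c w ih =>
    have hshift := startLvls_add r s 0 (wt r s c) w
    rw [zero_add] at hshift
    simp only [List.reverse_cons, lvls_append, ih, startLvls, zero_add, hshift, List.map_map,
      List.map_cons, lvls, wordWt_reverse, List.reverse_cons]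
    simp only [wordWt, List.map_cons, List.sum_cons]
    congr 3
    · funext p
      simp only [Function.comp_apply]
      ring_nf
    · ring

lemma startLvls_replicate_E (l : ℤ) (m : ℕ) :
    startLvls r s l (List.replicate m Letter.E) =
      (List.range m).map fun j : ℕ => (Letter.E, l + s * j) := by
  induction m generalizing l with
  | zero => rfl
  | succ m ih =>
    simp only [List.replicate_succ, startLvls, List.range_succ_eq_map, List.map_cons,
      List.map_map, ih]
    simp only [wt, Nat.cast_zero, mul_zero, add_zero]
    congr 2
    funext j
    simp only [Function.comp_apply, Nat.cast_succ]
    ring_nf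

lemma wordWt_replicate_E (m : ℕ) : wordWt r s (List.replicate m Letter.E) = s * m := by
  simp [wordWt, wt, mul_comm]

lemma nonneg_of_mem_startLvls {l : ℤ} {w : List Letter} (hl : 0 ≤ l)
    (hw : ∀ p ∈ lvls r s l w, 0 ≤ p.2) : ∀ p ∈ startLvls r s l w, 0 ≤ p.2 := by
  induction w generalizing l with
  | nil => simp [startLvls]
  | cons c w ih =>
    simp only [lvls, List.mem_cons, forall_eq_or_imp] at hw
    simp only [startLvls, List.mem_cons, forall_eq_or_imp]
    exact ⟨hl, ih hw.1 hw.2⟩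

end Levels

section Stairs

variable {a b : ℕ}

lemma startLvls_stairs_cons {q x y : ℕ} (qs : List ℕ) (hxq : x ≤ q) :
    startLvls b (-a) (b * y - a * x) (stairs b x (q :: qs)) =
      (List.range (q - x)).map (fun j : ℕ => (Letter.E, (b : ℤ) * y - a * x + -a * j)) ++
        (Letter.N, (b : ℤ) * y - a * q) ::
          startLvls b (-a) (b * ↑(y + 1) - a * q) (stairs b q qs) := by
  have hlvl : (b : ℤ) * y - a * x + wordWt b (-a) (List.replicate (q - x) Letter.E) =
      b * y - a * q := by
    rw [wordWt_replicate_E, Nat.cast_sub hxq]; ring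
  have hnext : (b : ℤ) * y - a * q + wt b (-a) Letter.N = b * ↑(y + 1) - a * q := by
    simp only [wt, Nat.cast_succ]; ring
  rw [stairs, startLvls_append, hlvl, startLvls, hnext, startLvls_replicate_E]

lemma stairs_startLvls_filter_N (qs : List ℕ) (x y : ℕ) (hqs : (x :: qs).Pairwise (· ≤ ·)) :
    (startLvls b (-a) (b * y - a * x) (stairs b x qs)).filter (·.1 = Letter.N) =
      (List.range qs.length).map fun i => (Letter.N, (b : ℤ) * (y + i) - a * qs.getD i 0) := by
  induction qs generalizing x y with
  | nil => simp [stairs, startLvls_replicate_E]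
  | cons q qs ih =>
    obtain ⟨hxq, hqs⟩ := List.pairwise_cons.mp hqs
    rw [startLvls_stairs_cons qs (hxq q List.mem_cons_self), List.filter_append,
      List.filter_cons_of_pos (by simp), ih q (y + 1) hqs, List.length_cons,
      List.range_succ_eq_map]
    simp only [List.filter_map, Function.comp_def, reduceCtorEq,
      decide_false, List.filter_false, List.map_nil, List.nil_append, List.map_cons,
      List.map_map, Nat.cast_zero, add_zero, List.getD_cons_zero, List.getD_cons_succ,
      Nat.cast_succ]
    congr 2
    funext i
    ring_nf

lemma stairs_startLvls_filter_E (qs : List ℕ) (x y : ℕ) (hqs : (x :: qs).Pairwise (· ≤ ·))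
    (hb : ∀ q ∈ x :: qs, q ≤ b) :
    (startLvls b (-a) (b * y - a * x) (stairs b x qs)).filter (·.1 = Letter.E) =
      (List.range' x (b - x)).map fun z =>
        (Letter.E, (b : ℤ) * (y + (qs.filter (· ≤ z)).length) - a * z) := by
  induction qs generalizing x y with
  | nil =>
    rw [stairs, startLvls_replicate_E, List.filter_eq_self.mpr (by simp),
      List.range'_eq_map_range, List.map_map]
    congr 1
    funext j
    simp only [Function.comp_apply, List.filter_nil, List.length_nil, Nat.cast_add,
      Nat.cast_zero, Prod.mk.injEq, true_and]
    ring
  | cons q qs ih =>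
    obtain ⟨hxq, hqs⟩ := List.pairwise_cons.mp hqs
    have hxq := hxq q List.mem_cons_self
    have hqb := hb q (by simp)
    rw [startLvls_stairs_cons qs hxq, List.filter_append, List.filter_cons_of_neg (by simp),
      ih q (y + 1) hqs (fun p hp => hb p (by simp_all)), List.filter_eq_self.mpr (by simp),
      show b - x = (q - x) + (b - q) by omega, ← List.range'_append_1,
      show x + (q - x) = q by omega, List.map_append, List.range'_eq_map_range (s := x),
      List.map_map]
    congr 1
    · refine List.map_congr_left fun j hj => ?_
      have hjq : x + j < q := by simp at hj; omega
      have hnone : (q :: qs).filter (· ≤ x + j) = [] :=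
        List.filter_eq_nil_iff.mpr fun p hp => by
          have : q ≤ p := by
            rcases List.mem_cons.mp hp with rfl | hp
            · exact le_rfl
            · exact (List.pairwise_cons.mp hqs).1 p hp
          simp only [decide_eq_true_eq]; omega
      simp only [hnone, List.length_nil, Function.comp_apply, Prod.mk.injEq, true_and]
      push_cast
      ring
    · refine List.map_congr_left fun z hz => ?_
      have hqz : q ≤ z := (List.mem_range'_1.mp hz).1
      rw [List.filter_cons_of_pos (by simpa)]
      simp only [List.length_cons, Prod.mk.injEq, true_and]
      push_cast
      ring

lemma stairs_length (qs : List ℕ) (x : ℕ) (hqs : (x :: qs).Pairwise (· ≤ ·))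
    (hb : ∀ q ∈ x :: qs, q ≤ b) : (stairs b x qs).length = b - x + qs.length := by
  induction qs generalizing x with
  | nil => simp [stairs]
  | cons q qs ih =>
    obtain ⟨hxq, hqs⟩ := List.pairwise_cons.mp hqs
    have hxq := hxq q List.mem_cons_self
    have hqb := hb q (by simp)
    simp only [stairs, List.length_append, List.length_replicate, List.length_cons,
      ih q hqs fun p hp => hb p (by simp_all)]
    omega

lemma getD_replicate_E_append_N_cons_eq_N_iff (m k : ℕ) (w : List Letter) :
    (List.replicate m Letter.E ++ Letter.N :: w).getD k Letter.E = Letter.N ↔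
      k = m ∨ m < k ∧ w.getD (k - m - 1) Letter.E = Letter.N := by
  rcases lt_trichotomy k m with hk | rfl | hk
  · rw [List.getD_append _ _ _ _ (by simpa), List.getD_replicate _ hk]
    simp only [reduceCtorEq, false_iff, not_or, not_and]
    omega
  · simp
  · obtain ⟨j, rfl⟩ := Nat.exists_eq_add_of_lt hk
    rw [List.getD_append_right _ _ _ _ (by simp; omega), List.length_replicate,
      show m + j + 1 - m = j + 1 by omega, List.getD_cons_succ]
    simp [hk.ne']

lemma stairs_getD_eq_N_iff (qs : List ℕ) (x k : ℕ) (hqs : (x :: qs).Pairwise (· ≤ ·)) :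
    (stairs b x qs).getD k Letter.E = Letter.N ↔ ∃ i < qs.length, k + x = qs.getD i 0 + i := by
  induction qs generalizing x k with
  | nil => simp [stairs, List.getD_eq_getElem?_getD]
  | cons q qs ih =>
    obtain ⟨hxq, hqs⟩ := List.pairwise_cons.mp hqs
    have hxq := hxq q List.mem_cons_self
    have hq_le : ∀ i < qs.length, q ≤ qs.getD i 0 := fun i hi => by
      rw [List.getD_eq_getElem _ _ hi]
      exact (List.pairwise_cons.mp hqs).1 _ (List.getElem_mem hi)
    rw [stairs, getD_replicate_E_append_N_cons_eq_N_iff, ih q _ hqs]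
    constructor
    · rintro (hk | ⟨hk, i, hi, heq⟩)
      · exact ⟨0, by simp, by simp; omega⟩
      · refine ⟨i + 1, by simpa, ?_⟩
        rw [List.getD_cons_succ]; omega
    · rintro ⟨_ | i, hi, heq⟩
      · left; simp at heq; omega
      · have := hq_le i (by simpa using hi)
        simp only [List.getD_cons_succ] at heq
        exact Or.inr ⟨by omega, i, by simpa using hi, by omega⟩

end Stairs

def rowLens (a : ℕ) (π : List ℕ) : List ℕ := (π ++ List.replicate (a - π.length) 0).reverse

def rowLen (a : ℕ) (π : List ℕ) (y : ℕ) : ℕ := (rowLens a π).getD y 0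

def colHeight (a : ℕ) (π : List ℕ) (x : ℕ) : ℕ := ((rowLens a π).filter (· ≤ x)).length

/-- The north step of `mkpath π` in row `y` starts at `(rowLen a π y, y)` and the east step in
column `x` starts at `(x, colHeight a π x)`; these are the `(b,-a)`-levels of those points. -/
def nLvl (a b : ℕ) (π : List ℕ) (y : ℕ) : ℤ := b * y - a * rowLen a π y

def eLvl (a b : ℕ) (π : List ℕ) (x : ℕ) : ℤ := b * colHeight a π x - a * x

def stepLvls (a b : ℕ) (π : List ℕ) : List (Letter × ℤ) :=
  (List.range a).map (fun y => (Letter.N, nLvl a b π y)) ++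
    (List.range b).map (fun x => (Letter.E, eLvl a b π x))

section Frontier

variable {a b : ℕ} {π : List ℕ}

lemma mkwd_eq_stairs (a b : ℕ) (π : List ℕ) : mkwd a b π = stairs b 0 (rowLens a π) := rfl

lemma length_rowLens (hπ : IsPtnIn a b π) : (rowLens a π).length = a := by
  have := hπ.2.1
  simp only [rowLens, List.length_reverse, List.length_append, List.length_replicate]
  omega

lemma pairwise_rowLens (hπ : IsPtnIn a b π) : (0 :: rowLens a π).Pairwise (· ≤ ·) := by
  refine List.pairwise_cons.mpr ⟨fun _ _ => Nat.zero_le _, ?_⟩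
  rw [rowLens, List.pairwise_reverse, List.pairwise_append]
  exact ⟨hπ.1, List.pairwise_replicate.mpr (Or.inr le_rfl),
    fun p _ q hq => (List.eq_of_mem_replicate hq).symm ▸ Nat.zero_le p⟩

lemma le_of_mem_rowLens (hπ : IsPtnIn a b π) : ∀ q ∈ 0 :: rowLens a π, q ≤ b := by
  intro q hq
  simp only [rowLens, List.mem_cons, List.mem_reverse, List.mem_append] at hq
  rcases hq with rfl | hq | hq
  · exact Nat.zero_le b
  · exact hπ.2.2 q hq
  · exact (List.eq_of_mem_replicate hq).symm ▸ Nat.zero_le b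

lemma rowLen_mono (hπ : IsPtnIn a b π) {y y' : ℕ} (hyy' : y ≤ y') (hy' : y' < a) :
    rowLen a π y ≤ rowLen a π y' := by
  have hlen := length_rowLens hπ
  rcases hyy'.eq_or_lt with rfl | hlt
  · exact le_rfl
  rw [rowLen, rowLen, List.getD_eq_getElem _ _ (by omega), List.getD_eq_getElem _ _ (by omega)]
  exact List.pairwise_iff_getElem.mp (List.pairwise_cons.mp (pairwise_rowLens hπ)).2
    y y' (by omega) (by omega) hlt

lemma colHeight_le (hπ : IsPtnIn a b π) (x : ℕ) : colHeight a π x ≤ a :=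
  (List.length_filter_le _ _).trans_eq (length_rowLens hπ)

lemma lt_colHeight (hπ : IsPtnIn a b π) {x y : ℕ} (hy : y < a) (hyx : rowLen a π y ≤ x) :
    y < colHeight a π x := by
  have hlen := length_rowLens hπ
  have htake : ((rowLens a π).take (y + 1)).filter (· ≤ x) = (rowLens a π).take (y + 1) := by
    refine List.filter_eq_self.mpr fun q hq => ?_
    obtain ⟨i, hi, rfl⟩ := List.getElem_of_mem hq
    have hi' : i ≤ y := by simp at hi; omega
    have := rowLen_mono hπ hi' hy
    rw [rowLen, List.getD_eq_getElem _ _ (by omega)] at this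
    simpa using this.trans hyx
  have := ((List.take_sublist (y + 1) (rowLens a π)).filter (· ≤ x)).length_le
  rw [htake, List.length_take] at this
  rw [colHeight]
  omega

lemma part_eq_rowLen (hπ : IsPtnIn a b π) {y : ℕ} (hy : y < a) :
    part π (a - y) = rowLen a π y := by
  have := hπ.2.1
  rw [part, rowLen, rowLens, List.getD_reverse _ (by simp; omega)]
  simp only [List.length_append, List.length_replicate]
  rw [show π.length + (a - π.length) - 1 - y = a - y - 1 by omega]
  rcases lt_or_ge (a - y - 1) π.length with h | h
  · rw [List.getD_append _ _ _ _ h]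
  · rw [List.getD_append_right _ _ _ _ h, List.getD_eq_default _ _ h,
      List.getD_replicate _ (by omega)]

lemma startLvls_mkwd_perm (hπ : IsPtnIn a b π) :
    (startLvls b (-a) 0 (mkwd a b π)).Perm (stepLvls a b π) := by
  have hfilter_E : (fun p : Letter × ℤ => !decide (p.1 = Letter.N)) =
      fun p => decide (p.1 = Letter.E) := by
    funext p; cases p.1 <;> rfl
  have h0 : (0 : ℤ) = b * (0 : ℕ) - a * (0 : ℕ) := by simp
  refine (List.filter_append_perm (·.1 = Letter.N) _).symm.trans (List.Perm.of_eq ?_)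
  rw [hfilter_E, mkwd_eq_stairs, h0,
    stairs_startLvls_filter_N _ _ _ (pairwise_rowLens hπ),
    stairs_startLvls_filter_E _ _ _ (pairwise_rowLens hπ) (le_of_mem_rowLens hπ),
    length_rowLens hπ, Nat.sub_zero, ← List.range_eq_range', stepLvls]
  simp [nLvl, eLvl, rowLen, colHeight]

lemma mkwd_length (hπ : IsPtnIn a b π) : (mkwd a b π).length = a + b := by
  rw [mkwd_eq_stairs, stairs_length _ _ (pairwise_rowLens hπ) (le_of_mem_rowLens hπ),
    length_rowLens hπ]
  omega

lemma mkwd_getElem_eq_N_iff (hπ : IsPtnIn a b π) {k : ℕ} (hk : k < (mkwd a b π).length) :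
    (mkwd a b π)[k] = Letter.N ↔ ∃ i < a, k = rowLen a π i + i := by
  rw [← List.getD_eq_getElem _ Letter.E hk, mkwd_eq_stairs,
    stairs_getD_eq_N_iff _ _ _ (pairwise_rowLens hπ), length_rowLens hπ]
  simp [rowLen]

end Frontier

lemma Nat.Coprime.eq_of_mul_modEq {a b u v : ℕ} (hab : a.Coprime b) (hu : u < a) (hv : v < a)
    (h : (b * u : ℤ) ≡ b * v [ZMOD a]) : u = v :=
  (Nat.ModEq.cancel_left_of_coprime hab
    (Int.natCast_modEq_iff.mp (by exact_mod_cast h))).eq_of_lt_of_lt hu hv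

section Distinct

variable {a b : ℕ} {π : List ℕ}

lemma nLvl_modEq (y : ℕ) : nLvl a b π y ≡ b * y [ZMOD a] :=
  Int.modEq_iff_dvd.mpr ⟨rowLen a π y, by rw [nLvl]; ring⟩

lemma eLvl_modEq (x : ℕ) : eLvl a b π x ≡ -(a * x) [ZMOD b] :=
  Int.modEq_iff_dvd.mpr ⟨-colHeight a π x, by rw [eLvl]; ring⟩

lemma nLvl_injOn (hab : a.Coprime b) : Set.InjOn (nLvl a b π) (Set.Iio a) := fun y hy y' hy' h =>
  hab.eq_of_mul_modEq hy hy' ((nLvl_modEq y).symm.trans (h ▸ nLvl_modEq y'))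

lemma eLvl_injOn (hab : a.Coprime b) : Set.InjOn (eLvl a b π) (Set.Iio b) := fun x hx x' hx' h =>
  hab.symm.eq_of_mul_modEq hx hx'
    (Int.neg_modEq_neg.mp ((eLvl_modEq x).symm.trans (h ▸ eLvl_modEq x')))

/-- Two lattice points of the rectangle with equal levels coincide unless they are the corners
`(0,0)` and `(b,a)`. No east step starts at `(b,a)` or at the start of a north step. -/
lemma nLvl_ne_eLvl (hab : a.Coprime b) (hπ : IsPtnIn a b π) {y x : ℕ} (hy : y < a)
    (hx : x < b) : nLvl a b π y ≠ eLvl a b π x := by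
  intro h
  have ha : (0 : ℤ) < a := by exact_mod_cast (Nat.zero_le y).trans_lt hy
  have hE : eLvl a b π x ≡ b * colHeight a π x [ZMOD a] :=
    Int.modEq_iff_dvd.mpr ⟨x, by rw [eLvl]; ring⟩
  have hmod : (b * y : ℤ) ≡ b * colHeight a π x [ZMOD a] :=
    (nLvl_modEq y).symm.trans (h ▸ hE)
  rcases (colHeight_le hπ x).lt_or_eq with hlt | heq
  · have hyh := hab.eq_of_mul_modEq hy hlt hmod
    have hrow : rowLen a π y = x := by
      rw [nLvl, eLvl, ← hyh] at h
      exact_mod_cast mul_left_cancel₀ ha.ne' (by linarith : (a : ℤ) * rowLen a π y = a * x)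
    exact (lt_colHeight hπ hy hrow.le).ne hyh
  · rw [heq] at hmod
    have hy0 : y = 0 := hab.eq_of_mul_modEq hy (by omega)
      (hmod.trans (Int.modEq_iff_dvd.mpr ⟨-(b : ℤ), by push_cast; ring⟩))
    rw [nLvl, eLvl, heq, hy0] at h
    have : (x : ℤ) = b + rowLen a π 0 :=
      mul_left_cancel₀ ha.ne' (by push_cast at h; linarith)
    omega

lemma nodup_stepLvls_snd (hab : a.Coprime b) (hπ : IsPtnIn a b π) :
    ((stepLvls a b π).map Prod.snd).Nodup := by
  simp only [stepLvls, List.map_append, List.map_map, Function.comp_def, List.nodup_append]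
  refine ⟨List.nodup_range.map_on fun y hy y' hy' => nLvl_injOn hab (List.mem_range.mp hy)
      (List.mem_range.mp hy'),
    List.nodup_range.map_on fun x hx x' hx' => eLvl_injOn hab (List.mem_range.mp hx)
      (List.mem_range.mp hx'), ?_⟩
  simp only [List.mem_map, List.mem_range]
  rintro _ ⟨y, hy, rfl⟩ _ ⟨x, hx, rfl⟩
  exact nLvl_ne_eLvl hab hπ hy hx

end Distinct

section Dyck

variable {a b : ℕ} {π : List ℕ}

lemma nonneg_of_mem_stepLvls (hπ : IsPtnIn a b π) (hD : IsDyckPtn a b π) :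
    ∀ p ∈ stepLvls a b π, 0 ≤ p.2 := fun p hp =>
  nonneg_of_mem_startLvls _ _ le_rfl hD p ((startLvls_mkwd_perm hπ).mem_iff.mpr hp)

lemma le_eLvl (hπ : IsPtnIn a b π) (hD : IsDyckPtn a b π) {x : ℕ} (hx : x < b) :
    (a : ℤ) ≤ eLvl a b π x := by
  have hmem : (Letter.E, eLvl a b π x) ∈ startLvls b (-a) 0 (mkwd a b π) :=
    (startLvls_mkwd_perm hπ).mem_iff.mpr
      (List.mem_append_right _ (by simpa using ⟨x, hx, rfl⟩))
  have := hD _ ((lvls_eq_map_startLvls _ _ _ _).symm ▸ List.mem_map_of_mem hmem)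
  simp only [wt] at this
  linarith

end Dyck

lemma Int.ModEq.add_le_of_lt {n u v : ℤ} (h : u ≡ v [ZMOD n]) (huv : u < v) : u + n ≤ v := by
  have := Int.le_of_dvd (by linarith) (Int.modEq_iff_dvd.mp h)
  linarith

lemma Int.ModEq.eq_of_lt_add {n u v : ℤ} (h : u ≡ v [ZMOD n]) (hu : u < v + n)
    (hv : v < u + n) : u = v := by
  rcases lt_trichotomy u v with huv | huv | huv
  · linarith [h.add_le_of_lt huv]
  · exact huv
  · linarith [h.symm.add_le_of_lt huv]

section GorskyMazin

variable {a b : ℕ} {π : List ℕ}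

lemma gGM_eq_card_Ico (β : ℤ) :
    gGM a b π β = #{v ∈ Finset.Ico β (β + a) | v ∈ lvlSet a b π} := by
  have : (Finset.range a).image (fun t : ℕ => β + t) = Finset.Ico β (β + a) := by
    ext v
    simp only [Finset.mem_image, Finset.mem_range, Finset.mem_Ico]
    exact ⟨by rintro ⟨t, ht, rfl⟩; omega, fun h => ⟨(v - β).toNat, by omega, by omega⟩⟩
  rw [gGM, this]

lemma mem_lvlSet_iff (hπ : IsPtnIn a b π) {v : ℤ} :
    v ∈ lvlSet a b π ↔
      0 < v ∧ ∃ y < a, v ≡ b * y [ZMOD a] ∧ v + a ≤ nLvl a b π y := by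
  simp only [lvlSet, Finset.mem_image, Finset.mem_filter, Finset.mem_product, Finset.mem_range,
    Prod.exists]
  simp only [sqLevel]
  constructor
  · rintro ⟨x, y, ⟨⟨hx, hy⟩, hrow, hpos⟩, rfl⟩
    rw [part_eq_rowLen hπ hy] at hrow
    refine ⟨hpos, y, hy, Int.modEq_iff_dvd.mpr ⟨x + 1, by ring⟩, ?_⟩
    rw [nLvl]
    have : (rowLen a π y : ℤ) ≤ x := by exact_mod_cast hrow
    nlinarith
  · rintro ⟨hpos, y, hy, hmod, hle⟩
    obtain ⟨k, hk⟩ := Int.modEq_iff_dvd.mp hmod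
    have ha : (0 : ℤ) < a := by omega
    have hk_row : (rowLen a π y : ℤ) + 1 ≤ k :=
      le_of_mul_le_mul_left (by rw [nLvl] at hle; linarith) ha
    have hk_b : k < b :=
      lt_of_mul_lt_mul_left (by nlinarith [(by exact_mod_cast hy : (y : ℤ) < a)]) ha.le
    refine ⟨(k - 1).toNat, y, ⟨⟨by omega, hy⟩, ?_, ?_⟩, ?_⟩
    · rw [part_eq_rowLen hπ hy]; omega
    · rw [Int.toNat_of_nonneg (by omega)]; linarith
    · rw [Int.toNat_of_nonneg (by omega)]; linarith

lemma mem_lvlSet_of_modEq (hab : a.Coprime b) (hπ : IsPtnIn a b π) {y : ℕ} (hy : y < a)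
    {v : ℤ} (hv : 0 ≤ v) (hmod : v ≡ b * y [ZMOD a]) (hlt : v < nLvl a b π y) :
    v ∈ lvlSet a b π := by
  have hle : v + a ≤ nLvl a b π y := (hmod.trans (nLvl_modEq y).symm).add_le_of_lt hlt
  refine (mem_lvlSet_iff hπ).mpr ⟨hv.lt_of_ne fun hv0 => ?_, y, hy, hmod, hle⟩
  have hy0 : y = 0 := hab.eq_of_mul_modEq hy (by omega) (by simpa [← hv0] using hmod.symm)
  have : (0 : ℤ) ≤ a * rowLen a π 0 := by positivity
  simp only [hy0, nLvl, Nat.cast_zero, mul_zero, zero_sub] at hle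
  omega

lemma gGM_eLvl_sub (hab : a.Coprime b) (hπ : IsPtnIn a b π) (hD : IsDyckPtn a b π) {x : ℕ}
    (hx : x < b) :
    gGM a b π (eLvl a b π x - a) = #{y ∈ Finset.range a | eLvl a b π x < nLvl a b π y} := by
  set β := eLvl a b π x - a with hβ
  have hβ0 : 0 ≤ β := by linarith [le_eLvl hπ hD hx]
  -- `w y` is the representative of `b * y` modulo `a` in the window `[β, β + a)`
  set w : ℕ → ℤ := fun y => β + (b * y - β) % a
  have hw_mod (y : ℕ) : w y ≡ b * y [ZMOD a] := by
    simpa using (Int.mod_modEq (b * y - β) a).add_left β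
  have hw_mem {y : ℕ} (ha : 0 < a) : β ≤ w y ∧ w y < β + a := by
    have := Int.emod_nonneg (b * y - β) (by omega : (a : ℤ) ≠ 0)
    have := Int.emod_lt_of_pos (b * y - β) (by omega : (0 : ℤ) < a)
    constructor <;> linarith
  rw [gGM_eq_card_Ico]
  symm
  apply Finset.card_nbij w
  · intro y hy
    simp only [Finset.coe_filter, Finset.mem_range, Set.mem_ofPred_eq, Finset.mem_Ico] at hy ⊢
    obtain ⟨hw_ge, hw_lt⟩ := hw_mem (y := y) (by omega)
    exact ⟨⟨hw_ge, hw_lt⟩,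
      mem_lvlSet_of_modEq hab hπ hy.1 (by linarith) (hw_mod y) (by linarith)⟩
  · intro y hy y' hy' h
    simp only [Finset.coe_filter, Finset.mem_range, Set.mem_ofPred_eq] at hy hy'
    exact hab.eq_of_mul_modEq hy.1 hy'.1 ((hw_mod y).symm.trans (h ▸ hw_mod y'))
  · intro v hv
    simp only [Finset.coe_filter, Finset.mem_Ico, Set.mem_ofPred_eq] at hv
    obtain ⟨⟨hv_ge, hv_lt⟩, hv⟩ := hv
    obtain ⟨-, y, hy, hmod, hle⟩ := (mem_lvlSet_iff hπ).mp hv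
    obtain ⟨hw_ge, hw_lt⟩ := hw_mem (y := y) (by omega)
    have hne := nLvl_ne_eLvl hab hπ hy hx
    refine ⟨y, ?_, ((hw_mod y).trans hmod.symm).eq_of_lt_add (by linarith) (by linarith)⟩
    simp only [Finset.coe_filter, Finset.mem_range, Set.mem_ofPred_eq]
    exact ⟨hy, lt_of_le_of_ne (by linarith) hne.symm⟩

end GorskyMazin

section Rank

variable {ι α : Type*} [LinearOrder α] (s : Finset ι) (f : ι → α)

def rankIn (i : ι) : ℕ := #{j ∈ s | f j < f i}

variable {s f}

lemma rankIn_lt_card {i : ι} (hi : i ∈ s) : rankIn s f i < #s :=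
  Finset.card_lt_card (Finset.filter_ssubset.mpr ⟨i, hi, lt_irrefl _⟩)

lemma card_filter_le_eq_card_sub_rankIn (i : ι) :
    #{j ∈ s | f i ≤ f j} = #s - rankIn s f i := by
  rw [rankIn, ← Finset.card_filter_add_card_filter_not (s := s) (fun j => f j < f i)]
  simp only [not_lt, add_tsub_cancel_left]

lemma rankIn_lt_rankIn {i j : ι} (hi : i ∈ s) (h : f i < f j) : rankIn s f i < rankIn s f j := by
  refine Finset.card_lt_card (Finset.ssubset_iff_of_subset ?_ |>.mpr ⟨i, ?_, ?_⟩)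
  · exact Finset.monotone_filter_right s fun k _ hk => hk.trans h
  · simpa [hi] using h
  · simp

lemma exists_rankIn_eq (hf : Set.InjOn f s) {k : ℕ} (hk : k < #s) :
    ∃ i ∈ s, rankIn s f i = k := by
  have hinj : Set.InjOn (rankIn s f) s := by
    intro i hi j hj hij
    by_contra hne
    rcases lt_trichotomy (f i) (f j) with h | h | h
    · exact (rankIn_lt_rankIn hi h).ne hij
    · exact hne (hf hi hj h)
    · exact (rankIn_lt_rankIn hj h).ne hij.symm
  obtain ⟨i, hi, hik⟩ := Finset.surj_on_of_inj_on_of_card_le (t := Finset.range #s)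
    (fun i _ => rankIn s f i) (fun i hi => Finset.mem_range.mpr (rankIn_lt_card hi))
    (fun i j hi hj hij => hinj hi hj hij) (by simp) k (Finset.mem_range.mpr hk)
  exact ⟨i, hi, hik.symm⟩

lemma card_sub_rankIn_le_iff {i : ι} (hi : i ∈ s) {c : α} (hc : ∀ j ∈ s, f j ≠ c) :
    #s - rankIn s f i ≤ #{j ∈ s | c < f j} ↔ c < f i := by
  rw [← card_filter_le_eq_card_sub_rankIn]
  constructor
  · intro hcard
    by_contra! hle
    have hsub : {j ∈ s | c < f j} ⊂ {j ∈ s | f i ≤ f j} := by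
      refine Finset.ssubset_iff_of_subset ?_ |>.mpr ⟨i, by simp [hi], by simp [hle]⟩
      exact Finset.monotone_filter_right s fun k _ hk =>
        ((lt_of_le_of_ne hle (hc i hi)).trans hk).le
    exact (Finset.card_lt_card hsub).not_ge hcard
  · intro hlt
    exact Finset.card_le_card (Finset.monotone_filter_right s fun k _ hk => hlt.trans_le hk)

end Rank

lemma Finset.card_filter_range_eq_countP (n : ℕ) (p : ℕ → Prop) [DecidablePred p] :
    #{i ∈ Finset.range n | p i} = (List.range n).countP (fun i => decide (p i)) := by
  rw [List.countP_eq_length_filter]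
  rfl

lemma List.filter_pos_append_replicate_zero {l : List ℕ} (hl : l.Pairwise (· ≥ ·)) :
    l.filter (0 < ·) ++ List.replicate (l.length - (l.filter (0 < ·)).length) 0 = l := by
  induction l with
  | nil => rfl
  | cons x t ih =>
    obtain ⟨hxt, ht⟩ := List.pairwise_cons.mp hl
    rcases Nat.eq_zero_or_pos x with rfl | hx
    · have ht0 : ∀ y ∈ t, y = 0 := fun y hy => Nat.le_zero.mp (hxt y hy)
      rw [List.filter_cons_of_neg (by simp),
        List.filter_eq_nil_iff.mpr fun y hy => by simp [ht0 y hy],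
        List.eq_replicate_iff.mpr ⟨rfl, ht0⟩]
      simp [List.replicate_succ]
    · rw [List.filter_cons_of_pos (by simpa), List.length_cons, List.length_cons,
        Nat.add_sub_add_right, List.cons_append, ih ht]

section GMpart

variable {a b : ℕ} {π : List ℕ}

lemma bGens_perm (hπ : IsPtnIn a b π) :
    (bGens a b π).Perm ((List.range b).map fun x => eLvl a b π x - a) := by
  rw [bGens]
  refine (List.mergeSort_perm _ _).trans ?_
  rw [lvls_eq_map_startLvls, List.filterMap_map]
  refine ((startLvls_mkwd_perm hπ).filterMap _).trans (List.Perm.of_eq ?_)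
  simp [stepLvls, List.filterMap_append, wt, sub_eq_add_neg]

def gmRow (a b : ℕ) (π : List ℕ) (j : ℕ) : ℕ :=
  #{x ∈ Finset.range b | j + 1 ≤ gGM a b π (eLvl a b π x - a)}

lemma GMpart_eq (hπ : IsPtnIn a b π) :
    GMpart a b π = ((List.range a).map (gmRow a b π)).filter (0 < ·) := by
  rw [GMpart]
  congr 2
  funext j
  rw [← List.countP_eq_length_filter, List.countP_map, (bGens_perm hπ).countP_eq,
    List.countP_map, gmRow, Finset.card_filter_range_eq_countP]
  rfl

lemma gmRow_antitone : Antitone (gmRow a b π) := fun _ _ hjj' =>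
  Finset.card_le_card (Finset.monotone_filter_right _ fun _ _ h => by omega)

lemma gmRow_le (j : ℕ) : gmRow a b π j ≤ b :=
  (Finset.card_filter_le _ _).trans_eq (Finset.card_range b)

lemma pairwise_gmRow : ((List.range a).map (gmRow a b π)).Pairwise (· ≥ ·) :=
  List.pairwise_map.mpr (List.pairwise_lt_range.imp fun h => gmRow_antitone h.le)

lemma rowLens_GMpart (hπ : IsPtnIn a b π) :
    rowLens a (GMpart a b π) = ((List.range a).map (gmRow a b π)).reverse := by
  rw [rowLens, GMpart_eq hπ]
  congr 1
  conv_rhs => rw [← List.filter_pos_append_replicate_zero pairwise_gmRow]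
  simp

lemma rowLen_GMpart (hπ : IsPtnIn a b π) {i : ℕ} (hi : i < a) :
    rowLen a (GMpart a b π) i = gmRow a b π (a - 1 - i) := by
  rw [rowLen, rowLens_GMpart hπ, List.getD_reverse _ (by simpa),
    List.getD_eq_getElem _ _ (by simp; omega)]
  simp

lemma isPtnIn_GMpart (hπ : IsPtnIn a b π) : IsPtnIn a b (GMpart a b π) := by
  rw [GMpart_eq hπ]
  refine ⟨pairwise_gmRow.filter _, (List.length_filter_le _ _).trans (by simp), fun q hq => ?_⟩
  obtain ⟨j, -, rfl⟩ := List.mem_map.mp (List.mem_filter.mp hq).1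
  exact gmRow_le j

lemma rowLen_GMpart_rankIn (hab : a.Coprime b) (hπ : IsPtnIn a b π) (hD : IsDyckPtn a b π)
    {Y : ℕ} (hY : Y < a) :
    rowLen a (GMpart a b π) (rankIn (Finset.range a) (nLvl a b π) Y) =
      #{x ∈ Finset.range b | eLvl a b π x < nLvl a b π Y} := by
  have hY' : Y ∈ Finset.range a := Finset.mem_range.mpr hY
  have hrank := rankIn_lt_card (f := nLvl a b π) hY'
  rw [Finset.card_range] at hrank
  rw [rowLen_GMpart hπ hrank, gmRow]
  congr 1
  refine Finset.filter_congr fun x hx => ?_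
  have hx := Finset.mem_range.mp hx
  rw [gGM_eLvl_sub hab hπ hD hx, ← card_sub_rankIn_le_iff (f := nLvl a b π) hY'
    fun y hy => nLvl_ne_eLvl hab hπ (Finset.mem_range.mp hy) hx, Finset.card_range]
  constructor <;> intro h <;> omega

lemma exists_rowLen_GMpart_iff (hab : a.Coprime b) (hπ : IsPtnIn a b π) (hD : IsDyckPtn a b π)
    (k : ℕ) :
    (∃ i < a, k = rowLen a (GMpart a b π) i + i) ↔
      ∃ Y < a, k = rankIn (Finset.range a) (nLvl a b π) Y +
        #{x ∈ Finset.range b | eLvl a b π x < nLvl a b π Y} := by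
  constructor
  · rintro ⟨i, hi, rfl⟩
    obtain ⟨Y, hY, rfl⟩ := exists_rankIn_eq (f := nLvl a b π) (s := Finset.range a)
      (by simpa using nLvl_injOn (π := π) hab)
      (by simpa using hi)
    have hY := Finset.mem_range.mp hY
    exact ⟨Y, hY, by rw [rowLen_GMpart_rankIn hab hπ hD hY, add_comm]⟩
  · rintro ⟨Y, hY, rfl⟩
    refine ⟨_, by simpa using rankIn_lt_card (f := nLvl a b π) (Finset.mem_range.mpr hY), ?_⟩
    rw [rowLen_GMpart_rankIn hab hπ hD hY, add_comm]

end GMpart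

section Sorting

variable {α β : Type*} [LinearOrder β] {f : α → β}

lemma List.Pairwise.countP_lt_getElem {l : List α} (hl : l.Pairwise (f · < f ·)) {k : ℕ}
    (hk : k < l.length) : l.countP (fun q => f q < f l[k]) = k := by
  induction l generalizing k with
  | nil => simp at hk
  | cons x t ih =>
    obtain ⟨hxt, ht⟩ := List.pairwise_cons.mp hl
    rcases k with _ | k
    · refine List.countP_eq_zero.mpr fun q hq => ?_
      rcases List.mem_cons.mp hq with rfl | hq
      · simp
      · simpa using (hxt q hq).le
    · rw [List.countP_cons, List.getElem_cons_succ, ih ht]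
      simp [hxt _ (List.getElem_mem _)]

lemma List.Pairwise.getElem_countP_lt {l : List α} (hl : l.Pairwise (f · < f ·)) {p : α}
    (hp : p ∈ l) :
    ∃ h : l.countP (fun q => f q < f p) < l.length, l[l.countP (fun q => f q < f p)] = p := by
  obtain ⟨k, hk, rfl⟩ := List.getElem_of_mem hp
  simp only [hl.countP_lt_getElem hk]
  exact ⟨hk, trivial⟩

lemma List.Pairwise.lt_of_nodup {l : List α} (hl : l.Pairwise (f · ≤ f ·))
    (hnd : (l.map f).Nodup) : l.Pairwise (f · < f ·) :=
  (hl.and (List.pairwise_map.mp hnd)).imp fun h => lt_of_le_of_ne h.1 h.2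

end Sorting

def sortedSteps (a b : ℕ) (π : List ℕ) : List (Letter × ℤ) :=
  (stepLvls a b π).mergeSort fun p q => p.2 ≤ q.2

section SortedSteps

variable {a b : ℕ} {π : List ℕ}

lemma sortedSteps_perm : (sortedSteps a b π).Perm (stepLvls a b π) := List.mergeSort_perm _ _

lemma length_sortedSteps : (sortedSteps a b π).length = a + b := by
  simp [sortedSteps_perm.length_eq, stepLvls]

lemma pairwise_sortedSteps (hab : a.Coprime b) (hπ : IsPtnIn a b π) :
    (sortedSteps a b π).Pairwise (·.2 < ·.2) := by
  refine List.Pairwise.lt_of_nodup (f := Prod.snd) ?_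
    ((sortedSteps_perm.map _).nodup_iff.mpr (nodup_stepLvls_snd hab hπ))
  simpa [sortedSteps] using
    List.pairwise_mergeSort (le := fun p q : Letter × ℤ => decide (p.2 ≤ q.2))
    (fun _ _ _ h h' => by simp_all only [decide_eq_true_eq]; exact h.trans h')
    (fun p q => by simpa using le_total p.2 q.2) (stepLvls a b π)

lemma countP_stepLvls_lt (K : ℤ) :
    (stepLvls a b π).countP (·.2 < K) =
      #{y ∈ Finset.range a | nLvl a b π y < K} +
        #{x ∈ Finset.range b | eLvl a b π x < K} := by
  rw [Finset.card_filter_range_eq_countP, Finset.card_filter_range_eq_countP, stepLvls,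
    List.countP_append, List.countP_map, List.countP_map]
  rfl

lemma sortedSteps_getElem_fst_eq_N_iff (hab : a.Coprime b) (hπ : IsPtnIn a b π) {k : ℕ}
    (hk : k < (sortedSteps a b π).length) :
    (sortedSteps a b π)[k].1 = Letter.N ↔
      ∃ Y < a, k = rankIn (Finset.range a) (nLvl a b π) Y +
        #{x ∈ Finset.range b | eLvl a b π x < nLvl a b π Y} := by
  have hS := pairwise_sortedSteps hab hπ
  have hpos {Y : ℕ} : (sortedSteps a b π).countP (·.2 < nLvl a b π Y) =
      rankIn (Finset.range a) (nLvl a b π) Y +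
        #{x ∈ Finset.range b | eLvl a b π x < nLvl a b π Y} := by
    rw [sortedSteps_perm.countP_eq, countP_stepLvls_lt, rankIn]
  constructor
  · intro hN
    have hmem := sortedSteps_perm.mem_iff.mp (List.getElem_mem hk)
    simp only [stepLvls, List.mem_append, List.mem_map, List.mem_range] at hmem
    rcases hmem with ⟨Y, hY, hYk⟩ | ⟨x, -, hxk⟩
    · refine ⟨Y, hY, ?_⟩
      have hlvl : nLvl a b π Y = (sortedSteps a b π)[k].2 := by rw [← hYk]
      rw [← hpos, hlvl, hS.countP_lt_getElem hk]
    · simp [← hxk] at hN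
  · rintro ⟨Y, hY, rfl⟩
    have hmem : (Letter.N, nLvl a b π Y) ∈ sortedSteps a b π :=
      sortedSteps_perm.mem_iff.mpr (List.mem_append_left _ (by simpa using ⟨Y, hY, rfl⟩))
    obtain ⟨_, hget⟩ := hS.getElem_countP_lt hmem
    simp only [hpos] at hget
    rw [hget]

end SortedSteps

lemma posBefore_trans {k k' k'' : ℤ} (h : posBefore k k' = true) (h' : posBefore k' k'' = true) :
    posBefore k k'' = true := by
  unfold posBefore at *
  split_ifs at * <;> simp_all <;> omega

lemma posBefore_total (k k' : ℤ) : (posBefore k k' || posBefore k' k) = true := by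
  unfold posBefore
  split_ifs <;> simp_all <;> omega

lemma posBefore_iff_of_nonpos {k k' : ℤ} (hk : k ≤ 0) (hk' : k' ≤ 0) :
    posBefore k k' = true ↔ k' ≤ k := by
  simp [posBefore, hk, hk']

section Sweep

variable {a b : ℕ} {π : List ℕ}

lemma wordWt_mkwd (hπ : IsPtnIn a b π) : wordWt b (-a) (mkwd a b π) = 0 := by
  calc wordWt b (-a) (mkwd a b π)
      = ((startLvls b (-a) 0 (mkwd a b π)).map (wt b (-a) ∘ Prod.fst)).sum := by
        rw [← List.map_map, startLvls_map_fst, wordWt]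
    _ = ((stepLvls a b π).map (wt b (-a) ∘ Prod.fst)).sum :=
        ((startLvls_mkwd_perm hπ).map _).sum_eq
    _ = 0 := by simp [stepLvls, Function.comp_def, wt, mul_comm]

lemma lvls_reverse_mkwd_perm (hπ : IsPtnIn a b π) :
    (lvls b (-a) 0 (mkwd a b π).reverse).Perm ((stepLvls a b π).map fun p => (p.1, -p.2)) := by
  rw [lvls_reverse, wordWt_mkwd hπ]
  simpa only [zero_sub] using (List.reverse_perm _).trans ((startLvls_mkwd_perm hπ).map _)

lemma sweepPos_reverse_mkwd (hab : a.Coprime b) (hπ : IsPtnIn a b π) (hD : IsDyckPtn a b π) :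
    sweepPos b (-a) (mkwd a b π).reverse = (sortedSteps a b π).map Prod.fst := by
  set L := (lvls b (-a) 0 (mkwd a b π).reverse).mergeSort fun p q => posBefore p.2 q.2
  have hperm : L.Perm ((sortedSteps a b π).map fun p => (p.1, -p.2)) :=
    (List.mergeSort_perm _ _).trans
      ((lvls_reverse_mkwd_perm hπ).trans (sortedSteps_perm.map _).symm)
  have hnonpos : ∀ p ∈ L, p.2 ≤ 0 := fun p hp => by
    obtain ⟨q, hq, rfl⟩ := List.mem_map.mp (hperm.mem_iff.mp hp)
    simpa using nonneg_of_mem_stepLvls hπ hD q (sortedSteps_perm.mem_iff.mp hq)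
  have hnodup : (L.map Prod.snd).Nodup := by
    refine (hperm.map _).nodup_iff.mpr ?_
    simpa [Function.comp_def] using
      ((sortedSteps_perm.map _).nodup_iff.mpr (nodup_stepLvls_snd hab hπ)).map neg_injective
  have hmerge : L.Pairwise fun p q => posBefore p.2 q.2 :=
    List.pairwise_mergeSort (le := fun p q : Letter × ℤ => posBefore p.2 q.2)
      (fun _ _ _ => posBefore_trans) (fun p q => posBefore_total p.2 q.2) _
  have hL : L.Pairwise fun p q => q.2 < p.2 :=
    (hmerge.and (List.pairwise_map.mp hnodup)).imp_of_mem fun hp hq h =>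
      lt_of_le_of_ne ((posBefore_iff_of_nonpos (hnonpos _ hp) (hnonpos _ hq)).mp h.1) h.2.symm
  have hsorted : ((sortedSteps a b π).map fun p => (p.1, -p.2)).Pairwise fun p q => q.2 < p.2 :=
    List.pairwise_map.mpr ((pairwise_sortedSteps hab hπ).imp neg_lt_neg)
  change L.map Prod.fst = _
  rw [hperm.eq_of_pairwise (fun _ _ _ _ h h' => (h.asymm h').elim) hL hsorted, List.map_map]
  rfl

end Sweep

theorem mkwd_GM_eq_sweep_general (a b : ℕ) (hab : Nat.Coprime a b)
    (π : List ℕ) (hπ : IsPtnIn a b π) (hD : IsDyckPtn a b π) :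
    mkwd a b (GMpart a b π) =
      sweepPos (b : ℤ) (-(a : ℤ)) ((mkwd a b π).reverse) := by
  have hG := isPtnIn_GMpart hπ
  rw [sweepPos_reverse_mkwd hab hπ hD]
  refine List.ext_getElem (by simp [mkwd_length hG, length_sortedSteps]) fun k hk _ =>
    Letter.eq_of_eq_N_iff ?_
  rw [List.getElem_map, sortedSteps_getElem_fst_eq_N_iff hab hπ, mkwd_getElem_eq_N_iff hG hk,
    exists_rowLen_GMpart_iff hab hπ hD]

/-- For coprime positive `a`, `b` and every `(b,-a)`-Dyck partition `π` in the
    `a×b` rectangle, `mkwd(G_{b,a}(π)) = sw⁺_{b,-a} ∘ rev (mkwd(π))`, where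
    `G_{b,a}` is the Gorsky–Mazin map. -/
theorem mkwd_GM_eq_sweep (a b : ℕ) (ha : 0 < a) (hb : 0 < b) (hab : Nat.Coprime a b)
    (π : List ℕ) (hπ : IsPtnIn a b π) (hD : IsDyckPtn a b π) :
    mkwd a b (GMpart a b π) =
      sweepPos (b : ℤ) (-(a : ℤ)) ((mkwd a b π).reverse) :=
  mkwd_GM_eq_sweep_general a b hab π hπ hD
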